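/- arXiv:1902.00609 — 3 statements merged into one kernel-verified Lean document; each statement's English description precedes it below -/
import Mathlib

section
/- Conflict-equivalent schedules are view equivalent (hence every conflict-serializable schedule is view serializable): say that S' is obtained from S by one non-conflicting adjacent swap if there exist schedules A, B and non-conflicting operations p, q with S = A ++ p :: q :: B and S' = A ++ q :: p :: B; say S and S' are conflict equivalent if they are related by the reflexive-transitive closure of this one-swap relation. Then whenever S and S' are conflict equivalent, S and S' are view equivalent, viewEquiv S S'. In particular, if a schedule is conflict equivalent to a serial schedule, it is view equivalent to that serial schedule. -/
/-! A schedule influences later operations only through the state it leaves behind, and a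
non-conflicting swap does not change that state. So conflict equivalence preserves the
final-state map `run S`, which is all that view equivalence depends on. -/

/-- Run a schedule (list of data operations) on a storage state, returning the final state. -/
def run {σ V : Type*} : List (σ → σ × V) → σ → σ
  | [], s => s
  | o :: P, s => run P ((o s).1)

/-- The return-value trace of a schedule started in a given state. -/
def trace {σ V : Type*} : List (σ → σ × V) → σ → List V
  | [], _ => []
  | o :: P, s => (o s).2 :: trace P ((o s).1)

/-- View equivalence of schedules: in any context, all future operations return identical values. -/
def viewEquiv {σ V : Type*} (S S' : List (σ → σ × V)) : Prop :=
  ∀ (A P : List (σ → σ × V)) (s : σ),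
    trace P (run (A ++ S) s) = trace P (run (A ++ S') s)

/-- Two operations are non-conflicting if both execution orders agree on final state
and on both operations' return values, from every state. -/
def nonConflicting {σ V : Type*} (p q : σ → σ × V) : Prop :=
  ∀ s : σ,
    (q ((p s).1)).1 = (p ((q s).1)).1 ∧
    (p s).2 = (p ((q s).1)).2 ∧
    (q s).2 = (q ((p s).1)).2

/-- Two operations are commutative if swapping them in any context preserves view equivalence. -/
def commutative {σ V : Type*} (o o' : σ → σ × V) : Prop :=
  ∀ (α β : List (σ → σ × V)), viewEquiv (α ++ [o, o'] ++ β) (α ++ [o', o] ++ β)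

/-- `oinv` is an inverse operation of `o`. -/
def inverseOp {σ V : Type*} (o oinv : σ → σ × V) : Prop :=
  ∀ (α β : List (σ → σ × V)), viewEquiv (α ++ β) (α ++ [o, oinv] ++ β)

/-- One adjacent swap of non-conflicting operations. -/
def swapNC {σ V : Type*} (S S' : List (σ → σ × V)) : Prop :=
  ∃ (A B : List (σ → σ × V)) (p q : σ → σ × V),
    nonConflicting p q ∧ S = A ++ p :: q :: B ∧ S' = A ++ q :: p :: B


theorem run_append {σ V : Type*} (L M : List (σ → σ × V)) (s : σ) :
    run (L ++ M) s = run M (run L s) := by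
  induction L generalizing s with
  | nil => rfl
  | cons o L ih => exact ih _

theorem viewEquiv_of_run_eq {σ V : Type*} {S S' : List (σ → σ × V)}
    (h : run S = run S') : viewEquiv S S' := by
  intro A P s
  rw [run_append, run_append, h]

theorem nonConflicting.run_cons_cons {σ V : Type*} {p q : σ → σ × V}
    (h : nonConflicting p q) (B : List (σ → σ × V)) (s : σ) :
    run (p :: q :: B) s = run (q :: p :: B) s :=
  congrArg (run B) (h s).1

theorem swapNC.run_eq {σ V : Type*} {S S' : List (σ → σ × V)}
    (h : swapNC S S') : run S = run S' := by
  obtain ⟨A, B, p, q, hpq, rfl, rfl⟩ := h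
  funext s
  rw [run_append, run_append, hpq.run_cons_cons]

/-- Conflict-equivalent schedules (related by a chain of non-conflicting adjacent swaps)
are view equivalent; hence conflict-serializable schedules are view serializable. -/
theorem conflictEquiv_viewEquiv {σ V : Type*} (S S' : List (σ → σ × V))
    (h : Relation.ReflTransGen swapNC S S') : viewEquiv S S' := by
  have sameRun : Equivalence fun S S' : List (σ → σ × V) => run S = run S' :=
    ⟨fun _ => rfl, Eq.symm, Eq.trans⟩
  exact viewEquiv_of_run_eq
    (Relation.reflTransGen_le_of_equivalence_of_le sameRun (fun _ _ => swapNC.run_eq) _ _ h)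
end

section
/- Theorem 5 (aborting a commutative operation via its inverse): suppose the operations o and o' are commutative, and o⁻¹ is an inverse operation of o. Then for any two schedules α and β, the schedules α ++ [o, o', o⁻¹] ++ β and α ++ [o'] ++ β are view equivalent, i.e., viewEquiv (α ++ [o, o', o⁻¹] ++ β) (α ++ [o'] ++ β). -/
theorem viewEquiv.symm {σ V : Type*} {S S' : List (σ → σ × V)} (h : viewEquiv S S') :
    viewEquiv S' S :=
  fun A P s => (h A P s).symm

theorem viewEquiv.trans {σ V : Type*} {S S' S'' : List (σ → σ × V)} (h : viewEquiv S S')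
    (h' : viewEquiv S' S'') : viewEquiv S S'' :=
  fun A P s => (h A P s).trans (h' A P s)

/-- Theorem 5: if o and o' are commutative and oinv is an inverse of o, then
[o, o', oinv] is view equivalent to [o'] in any context. -/
theorem abort_via_inverse {σ V : Type*} (o o' oinv : σ → σ × V)
    (hcomm : commutative o o') (hinv : inverseOp o oinv)
    (α β : List (σ → σ × V)) :
    viewEquiv (α ++ [o, o', oinv] ++ β) (α ++ [o'] ++ β) := by
  have swap : viewEquiv (α ++ [o, o', oinv] ++ β) (α ++ [o', o, oinv] ++ β) := by
    simpa using hcomm α (oinv :: β)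
  have cancel : viewEquiv (α ++ [o', o, oinv] ++ β) (α ++ [o'] ++ β) := by
    simpa using (hinv (α ++ [o']) β).symm
  exact swap.trans cancel
end

section
/- Correctness of transaction rollback by inverse operations in reverse order: let L be a list of pairs of operations such that for every pair (o, o⁻¹) in L, o⁻¹ is an inverse operation of o. Then for any two schedules α and β, executing the first components of L in order followed by the second components of L in reverse order is view equivalent to executing nothing: viewEquiv (α ++ (L.map Prod.fst) ++ (L.map Prod.snd).reverse ++ β) (α ++ β). -/
/-- Rollback correctness: executing operations then their inverses in reverse order
is view equivalent to executing nothing. -/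
theorem rollback_correct {σ V : Type*}
    (L : List ((σ → σ × V) × (σ → σ × V)))
    (h : ∀ p ∈ L, inverseOp p.1 p.2)
    (α β : List (σ → σ × V)) :
    viewEquiv (α ++ (L.map Prod.fst) ++ (L.map Prod.snd).reverse ++ β) (α ++ β) := by
  induction L generalizing α β with
  | nil => intro A P s; simp
  | cons p L ih =>
    have h1 := ih (fun q hq => h q (List.mem_cons_of_mem _ hq)) (α ++ [p.1]) ([p.2] ++ β)
    have h2 := h p List.mem_cons_self α β
    intro A P s
    have e1 := h1 A P s
    have e2 := h2 A P s
    simp only [List.map_cons, List.reverse_cons, List.append_assoc, List.cons_append,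
      List.nil_append, List.singleton_append] at e1 e2 ⊢
    exact e1.trans e2.symm
end
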